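/- Let s ∈ (−1,1), set L = (1 + |s|)/(1 − |s|), let ε₀ > 0, and let ψ : S¹ → S¹ be continuous with |ψ(ζ) − h_s(ζ)| ≤ ε₀ for every ζ ∈ S¹. Then d_{S¹}(h_s^{-1}(ψ(ζ)), ζ) ≤ π·L·ε₀/2 for every ζ ∈ S¹; moreover, every w ∈ 𝔻 with ξ_{h_s^{-1}∘ψ}(w) = 0 satisfies |w| ≤ 2·π·L·ε₀/2 = π·L·ε₀. -/

import Mathlib

/-!
Since `h_{-s}` is `(1 + |s|)/(1 - |s|)`-Lipschitz on the circle, `φ = h_{-s} ∘ ψ` moves every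
point by a chord of length at most `L ε₀`, hence by an angle at most `δ = π L ε₀ / 2`; the arc
distance is bounded by that angle.

If `ξ_φ(w) = 0` with `w = r e^{iα}`, rotating by `e^{-iα}` gives `∫ Re B_r(u(x)) dx = 0` for the
Blaschke factor `B_r(z) = (z - r)/(1 - r z) = h_{-r}(z)` and `u(x) = e^{-iα} φ(e^{ix})`. On the
circle `Re B_r(z)` is an increasing function of `Re z`, and `u(x)` is within angle `δ` of
`e^{i(x - α)}`, so the integrand is at most `Re B_r` at the point of angle
`max 0 (|x - α| - δ)`. By the mean value property `∫ Re B_r(e^{iθ}) dθ = -2πr`, and shrinking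
all angles by `δ` raises this integral by at most `4δ` (as `-1 ≤ Re B_r ≤ 1`). Hence
`0 ≤ 4δ - 2πr`, i.e. `|w| ≤ L ε₀`.
-/

/-- The Möbius transformation `h_s(z) = (z + s)/(1 + s z)` of the unit disk,
for a real parameter `s`.  Its inverse is `h_{-s}`. -/
noncomputable def mobH (s : ℝ) (z : ℂ) : ℂ := (z + (s : ℂ)) / (1 + (s : ℂ) * z)

/-- Arc-length distance on the unit circle: the infimum of `|x₁ − x₂|` over
representatives `ζ₁ = e^{ix₁}`, `ζ₂ = e^{ix₂}`. -/
noncomputable def dS1 (ζ₁ ζ₂ : ℂ) : ℝ :=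
  sInf {d : ℝ | ∃ x₁ x₂ : ℝ, ζ₁ = Complex.exp (Complex.I * (x₁ : ℂ)) ∧
    ζ₂ = Complex.exp (Complex.I * (x₂ : ℂ)) ∧ d = |x₁ - x₂|}

/-- The average `ξ_φ(w) = (1/2π)·∫₀^{2π} (φ(e^{ix}) − w)/(1 − w̄·φ(e^{ix})) dx`
of a circle map `φ` taken at `w` in the unit disk. -/
noncomputable def avgMap (φ : ℂ → ℂ) (w : ℂ) : ℂ :=
  (1 / (2 * Real.pi)) • ∫ x in (0 : ℝ)..(2 * Real.pi),
    (φ (Complex.exp (Complex.I * (x : ℂ))) - w) /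
      (1 - (starRingEnd ℂ) w * φ (Complex.exp (Complex.I * (x : ℂ))))

open Complex InnerProductGeometry Metric Set
open scoped Real ComplexConjugate

section Mobius

variable {t : ℝ}

lemma one_sub_abs_le_norm_one_add_mul {z : ℂ} (hz : ‖z‖ ≤ 1) :
    1 - |t| ≤ ‖1 + (t : ℂ) * z‖ := by
  have h := norm_sub_norm_le (1 : ℂ) (-((t : ℂ) * z))
  rw [norm_neg, norm_mul, norm_real, Real.norm_eq_abs, norm_one, sub_neg_eq_add] at h
  nlinarith [abs_nonneg t]

lemma one_add_mul_ne_zero (ht : |t| < 1) {z : ℂ} (hz : ‖z‖ ≤ 1) :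
    1 + (t : ℂ) * z ≠ 0 :=
  norm_pos_iff.mp ((sub_pos.mpr ht).trans_le (one_sub_abs_le_norm_one_add_mul hz))

lemma norm_mobH (ht : |t| < 1) {z : ℂ} (hz : ‖z‖ = 1) : ‖mobH t z‖ = 1 := by
  have hzz : z * conj z = 1 := by rw [mul_conj, normSq_eq_norm_sq, hz]; norm_num
  have hden : 1 + (t : ℂ) * z = z * conj (z + t) := by
    rw [map_add, conj_ofReal]; linear_combination -hzz
  have hzt : z + t ≠ 0 := by
    intro h
    rw [eq_neg_of_add_eq_zero_left h, norm_neg, norm_real, Real.norm_eq_abs] at hz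
    exact ht.ne hz
  rw [mobH, hden, norm_div, norm_mul, hz, norm_conj, one_mul,
    div_self (norm_ne_zero_iff.mpr hzt)]

lemma mobH_neg_mobH (ht : |t| < 1) {z : ℂ} (hz : 1 + (t : ℂ) * z ≠ 0) :
    mobH (-t) (mobH t z) = z := by
  have ht2 : (1 : ℂ) - (t : ℂ) ^ 2 ≠ 0 := by
    norm_cast
    nlinarith [abs_nonneg t, sq_abs t]
  have hnum : (z + t) / (1 + t * z) + -(t : ℂ) = z * ((1 - (t : ℂ) ^ 2) / (1 + t * z)) := by
    rw [div_add' _ _ _ hz, mul_div_assoc']; ring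
  have hden : 1 + -(t : ℂ) * ((z + t) / (1 + t * z)) = (1 - (t : ℂ) ^ 2) / (1 + t * z) := by
    rw [mul_div_assoc', add_div' _ _ _ hz]; ring
  simp only [mobH, ofReal_neg]
  rw [hnum, hden, mul_div_cancel_right₀ _ (div_ne_zero ht2 hz)]

lemma norm_mobH_sub_mobH_le (ht : |t| < 1) {a b : ℂ} (ha : ‖a‖ ≤ 1) (hb : ‖b‖ ≤ 1) :
    ‖mobH t a - mobH t b‖ ≤ (1 + |t|) / (1 - |t|) * ‖a - b‖ := by
  have ht0 : 0 < 1 - |t| := sub_pos.mpr ht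
  have hda := one_sub_abs_le_norm_one_add_mul (t := t) ha
  have hdb := one_sub_abs_le_norm_one_add_mul (t := t) hb
  have hdiff : mobH t a - mobH t b =
      (1 - (t : ℂ) ^ 2) * (a - b) / ((1 + t * a) * (1 + t * b)) := by
    rw [mobH, mobH, div_sub_div _ _ (one_add_mul_ne_zero ht ha) (one_add_mul_ne_zero ht hb)]
    ring
  have hnum : ‖(1 : ℂ) - (t : ℂ) ^ 2‖ = (1 - |t|) * (1 + |t|) := by
    rw [← ofReal_pow, ← ofReal_one, ← ofReal_sub, norm_real, Real.norm_eq_abs,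
      abs_of_nonneg (by nlinarith [sq_abs t, abs_nonneg t])]
    nlinarith [sq_abs t]
  rw [hdiff, norm_div, norm_mul, norm_mul, hnum, div_le_iff₀ (mul_pos (ht0.trans_le hda) (ht0.trans_le hdb))]
  calc (1 - |t|) * (1 + |t|) * ‖a - b‖
      = (1 + |t|) / (1 - |t|) * ‖a - b‖ * ((1 - |t|) * (1 - |t|)) := by field_simp
    _ ≤ (1 + |t|) / (1 - |t|) * ‖a - b‖ * (‖1 + t * a‖ * ‖1 + t * b‖) := by gcongr

lemma differentiableOn_mobH (ht : |t| < 1) : DifferentiableOn ℂ (mobH t) (closedBall 0 1) :=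
  fun z hz => by
    have := one_add_mul_ne_zero ht (mem_closedBall_zero_iff.mp hz)
    unfold mobH
    fun_prop (disch := assumption)

lemma continuous_mobH_comp (ht : |t| < 1) {u : ℝ → ℂ} (hu : Continuous u)
    (hu1 : ∀ x, ‖u x‖ = 1) : Continuous fun x => mobH t (u x) :=
  (differentiableOn_mobH ht).continuousOn.comp_continuous hu fun x => by simp [hu1 x]

end Mobius

section CircleGeometry

lemma exp_arg_mul_I {z : ℂ} (hz : ‖z‖ = 1) : exp (z.arg * I) = z := by
  simpa [hz] using norm_mul_exp_arg_mul_I z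

lemma dS1_le_angle {a b : ℂ} (ha : ‖a‖ = 1) (hb : ‖b‖ = 1) : dS1 a b ≤ angle a b := by
  have ha0 : a ≠ 0 := norm_ne_zero_iff.mp (by simp [ha])
  have hb0 : b ≠ 0 := norm_ne_zero_iff.mp (by simp [hb])
  have hab : ‖a / b‖ = 1 := by rw [norm_div, ha, hb, div_one]
  rw [angle_eq_abs_arg ha0 hb0]
  refine csInf_le ⟨0, fun d ⟨_, _, _, _, hd⟩ => hd ▸ abs_nonneg _⟩
    ⟨b.arg + (a / b).arg, b.arg, ?_, ?_, by rw [add_sub_cancel_left]⟩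
  · rw [mul_comm, ofReal_add, add_mul, Complex.exp_add, exp_arg_mul_I hb, exp_arg_mul_I hab,
      mul_div_cancel₀ _ hb0]
  · rw [mul_comm, exp_arg_mul_I hb]

lemma angle_one_left_eq_arccos_re {z : ℂ} (hz : ‖z‖ = 1) : angle 1 z = Real.arccos z.re := by
  rw [angle, Complex.inner, map_one, mul_one, norm_one, hz, one_mul, div_one]

lemma re_le_cos_max_arccos_re_sub {u v : ℂ} (hu : ‖u‖ = 1) (hv : ‖v‖ = 1) {δ : ℝ}
    (huv : angle u v ≤ δ) : u.re ≤ Real.cos (max 0 (Real.arccos v.re - δ)) := by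
  have htri := angle_le_angle_add_angle 1 u v
  rw [angle_one_left_eq_arccos_re hu, angle_one_left_eq_arccos_re hv] at htri
  have hle : max 0 (Real.arccos v.re - δ) ≤ Real.arccos u.re :=
    max_le (Real.arccos_nonneg _) (by linarith)
  obtain ⟨hre₁, hre₂⟩ := abs_le.mp (hu ▸ abs_re_le_norm u)
  calc u.re = Real.cos (Real.arccos u.re) := (Real.cos_arccos hre₁ hre₂).symm
    _ ≤ Real.cos (max 0 (Real.arccos v.re - δ)) :=
        Real.cos_le_cos_of_nonneg_of_le_pi (le_max_left _ _) (Real.arccos_le_pi _) hle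

end CircleGeometry

section BlaschkeRe

variable {r c : ℝ}

noncomputable def blaschkeRe (r c : ℝ) : ℝ := ((1 + r ^ 2) * c - 2 * r) / (1 + r ^ 2 - 2 * r * c)

lemma re_mobH_neg (r : ℝ) {η : ℂ} (hη : ‖η‖ = 1) : (mobH (-r) η).re = blaschkeRe r η.re := by
  have hn : η.re * η.re + η.im * η.im = 1 := by
    rw [← normSq_apply, normSq_eq_norm_sq, hη, one_pow]
  rw [mobH, div_re, ← add_div, normSq_apply, blaschkeRe]
  simp only [add_re, add_im, mul_re, mul_im, one_re, one_im, ofReal_re, ofReal_im]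
  congr 1
  · linear_combination (-r) * hn
  · linear_combination r ^ 2 * hn

lemma blaschkeRe_denom_pos (hr0 : 0 ≤ r) (hr1 : r < 1) (hc : c ≤ 1) :
    0 < 1 + r ^ 2 - 2 * r * c := by
  nlinarith

lemma monotoneOn_blaschkeRe (hr0 : 0 ≤ r) (hr1 : r < 1) : MonotoneOn (blaschkeRe r) (Iic 1) := by
  intro c₁ hc₁ c₂ hc₂ h
  rw [blaschkeRe, blaschkeRe, div_le_div_iff₀ (blaschkeRe_denom_pos hr0 hr1 hc₁)
    (blaschkeRe_denom_pos hr0 hr1 hc₂)]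
  nlinarith [mul_nonneg (sub_nonneg.2 h) (sq_nonneg (1 - r ^ 2))]

lemma blaschkeRe_one (hr : r ≠ 1) : blaschkeRe r 1 = 1 := by
  rw [blaschkeRe, div_eq_one_iff_eq]
  · ring
  · nlinarith [sq_pos_of_ne_zero (sub_ne_zero.mpr hr)]

lemma neg_one_le_blaschkeRe (hr0 : 0 ≤ r) (hr1 : r < 1) (hc : -1 ≤ c) (hc1 : c ≤ 1) :
    -1 ≤ blaschkeRe r c := by
  rw [blaschkeRe, le_div_iff₀ (blaschkeRe_denom_pos hr0 hr1 hc1)]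
  nlinarith [mul_nonneg (by linarith : (0 : ℝ) ≤ 1 + c) (sq_nonneg (1 - r))]

lemma continuousOn_blaschkeRe (hr0 : 0 ≤ r) (hr1 : r < 1) : ContinuousOn (blaschkeRe r) (Iic 1) :=
  fun c hc => by
    have := (blaschkeRe_denom_pos hr0 hr1 hc).ne'
    unfold blaschkeRe
    fun_prop (disch := assumption)

lemma continuous_blaschkeRe_cos (hr0 : 0 ≤ r) (hr1 : r < 1) :
    Continuous fun θ => blaschkeRe r (Real.cos θ) :=
  (continuousOn_blaschkeRe hr0 hr1).comp_continuous Real.continuous_cos Real.cos_le_one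

end BlaschkeRe

section RealIntegrals

open intervalIntegral

lemma integral_comp_max_sub_le {f : ℝ → ℝ} (hf : Continuous f) {a δ m : ℝ} (hδ : 0 ≤ δ)
    (hδa : δ ≤ a) (hm : ∀ y ∈ Icc (a - δ) a, m ≤ f y) :
    ∫ y in 0..a, f (max 0 (y - δ)) ≤ (∫ y in 0..a, f y) + δ * (f 0 - m) := by
  have hcont : Continuous fun y => f (max 0 (y - δ)) := by fun_prop
  have hflat : ∫ y in 0..δ, f (max 0 (y - δ)) = δ * f 0 := by
    rw [integral_congr (g := fun _ => f 0) fun y hy => ?_, integral_const, smul_eq_mul, sub_zero]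
    rw [uIcc_of_le hδ] at hy
    simp only [max_eq_left (sub_nonpos.mpr hy.2)]
  have hshift : ∫ y in δ..a, f (max 0 (y - δ)) = ∫ y in 0..a - δ, f y := by
    rw [integral_congr (g := fun y => f (y - δ)) fun y hy => ?_, integral_comp_sub_right, sub_self]
    rw [uIcc_of_le hδa] at hy
    simp only [max_eq_right (sub_nonneg.mpr hy.1)]
  have htail : δ * m ≤ ∫ y in a - δ..a, f y := by
    have := integral_mono_on (μ := MeasureTheory.volume) (by linarith) intervalIntegrable_const (hf.intervalIntegrable _ _) hm
    rwa [integral_const, smul_eq_mul, sub_sub_cancel] at this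
  rw [← integral_add_adjacent_intervals (hcont.intervalIntegrable 0 δ)
      (hcont.intervalIntegrable δ a), hflat, hshift,
    ← integral_add_adjacent_intervals (hf.intervalIntegrable 0 (a - δ))
      (hf.intervalIntegrable (a - δ) a)]
  linarith

lemma integral_comp_arccos_cos_sub {g : ℝ → ℝ} (hg : Continuous g) (α : ℝ) :
    ∫ θ in 0..2 * π, g (Real.arccos (Real.cos (θ - α))) = 2 * ∫ y in 0..π, g y := by
  set G : ℝ → ℝ := fun θ => g (Real.arccos (Real.cos θ))
  have hG : Continuous G := by fun_prop
  have hper : Function.Periodic G (2 * π) := fun θ => by simp only [G, Real.cos_add_two_pi]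
  have hleft : ∫ θ in 0..π, G θ = ∫ y in 0..π, g y :=
    integral_congr fun θ hθ => by
      rw [uIcc_of_le Real.pi_pos.le] at hθ
      simp only [G, Real.arccos_cos hθ.1 hθ.2]
  have hright : ∫ θ in π..2 * π, G θ = ∫ θ in 0..π, G θ := by
    have h := integral_comp_sub_left (a := 0) (b := π) G (2 * π)
    rw [show 2 * π - π = π by ring, sub_zero] at h
    rw [← h]
    exact integral_congr fun θ _ => by simp only [G, Real.cos_two_pi_sub]
  calc ∫ θ in 0..2 * π, G (θ - α)
      = ∫ θ in -α..-α + 2 * π, G θ := by rw [integral_comp_sub_right]; ring_nf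
    _ = ∫ θ in 0..0 + 2 * π, G θ := hper.intervalIntegral_add_eq _ _
    _ = 2 * ∫ y in 0..π, g y := by
      rw [zero_add, ← integral_add_adjacent_intervals (hG.intervalIntegrable 0 π)
        (hG.intervalIntegrable π (2 * π)), hright, hleft, two_mul]

end RealIntegrals

section AveragesOfBlaschkeFactors

open intervalIntegral

variable {r : ℝ}

lemma integral_mobH_neg_exp (hr : |r| < 1) :
    ∫ θ in 0..2 * π, mobH (-r) (exp (θ * I)) = -(2 * π * r) := by
  have hmean : Real.circleAverage (mobH (-r)) 0 1 = mobH (-r) 0 :=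
    ((differentiableOn_mobH (by rwa [abs_neg])).diffContOnCl_ball
      (by rw [abs_one])).circleAverage
  rw [Real.circleAverage_def] at hmean
  simp only [circleMap_zero, ofReal_one, one_mul, mobH, zero_add, mul_zero, add_zero,
    div_one, ofReal_neg] at hmean ⊢
  rw [inv_smul_eq_iff₀ (by positivity)] at hmean
  rw [hmean, real_smul]
  push_cast
  ring

lemma integral_blaschkeRe_cos (hr0 : 0 ≤ r) (hr1 : r < 1) :
    ∫ θ in 0..2 * π, blaschkeRe r (Real.cos θ) = -(2 * π * r) := by
  have hr : |r| < 1 := by rwa [abs_of_nonneg hr0]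
  have hint : IntervalIntegrable (fun θ : ℝ => mobH (-r) (exp (θ * I))) MeasureTheory.volume
      0 (2 * π) :=
    (continuous_mobH_comp (by rwa [abs_neg]) (by fun_prop) norm_exp_ofReal_mul_I).intervalIntegrable
      _ _
  calc ∫ θ in 0..2 * π, blaschkeRe r (Real.cos θ)
      = ∫ θ in 0..2 * π, reCLM (mobH (-r) (exp (θ * I))) :=
        integral_congr fun θ _ => by
          rw [reCLM_apply, re_mobH_neg r (norm_exp_ofReal_mul_I θ), exp_ofReal_mul_I_re]
    _ = -(2 * π * r) := by
      rw [reCLM.intervalIntegral_comp_comm hint, integral_mobH_neg_exp hr]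
      norm_cast

lemma integral_blaschkeRe_cos_max_arccos_le {δ : ℝ} (hr0 : 0 ≤ r) (hr1 : r < 1) (hδ0 : 0 ≤ δ)
    (hδπ : δ ≤ π) (α : ℝ) :
    ∫ θ in 0..2 * π, blaschkeRe r (Real.cos (max 0 (Real.arccos (Real.cos (θ - α)) - δ)))
      ≤ 2 * (2 * δ - π * r) := by
  have hF := continuous_blaschkeRe_cos hr0 hr1
  have hhalf : ∫ y in 0..π, blaschkeRe r (Real.cos y) = -(π * r) := by
    have h := integral_comp_arccos_cos_sub hF 0
    simp only [sub_zero, Real.cos_arccos (Real.neg_one_le_cos _) (Real.cos_le_one _),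
      integral_blaschkeRe_cos hr0 hr1] at h
    linarith
  have hmax := integral_comp_max_sub_le hF hδ0 hδπ (m := -1)
    fun y _ => neg_one_le_blaschkeRe hr0 hr1 (Real.neg_one_le_cos y) (Real.cos_le_one y)
  rw [Real.cos_zero, blaschkeRe_one hr1.ne, hhalf] at hmax
  rw [integral_comp_arccos_cos_sub (g := fun y => blaschkeRe r (Real.cos (max 0 (y - δ))))
    (hF.comp (by fun_prop)) α]
  linarith

end AveragesOfBlaschkeFactors

lemma sub_div_one_sub_conj_mul_eq (w z : ℂ) :
    (z - w) / (1 - conj w * z) =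
      exp (w.arg * I) * mobH (-‖w‖) ((exp (w.arg * I))⁻¹ * z) := by
  set e := exp (w.arg * I)
  have he : e ≠ 0 := exp_ne_zero _
  have hw : w = ‖w‖ * e := (norm_mul_exp_arg_mul_I w).symm
  have hconj : conj w = ‖w‖ * e⁻¹ := by
    rw [hw, map_mul, conj_ofReal, ← exp_conj, map_mul, conj_ofReal, conj_I, mul_neg, exp_neg,
      norm_mul, norm_real, norm_norm, norm_exp_ofReal_mul_I, mul_one]
  rw [mobH, ofReal_neg, mul_div_assoc', hconj]
  nth_rw 1 [hw]
  congr 1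
  · field_simp; ring
  · ring

open intervalIntegral in
theorem pi_mul_norm_le_of_avgMap_eq_zero {φ : ℂ → ℂ} (hcont : ContinuousOn φ {z : ℂ | ‖z‖ = 1})
    (hmaps : ∀ ζ : ℂ, ‖ζ‖ = 1 → ‖φ ζ‖ = 1) {δ : ℝ}
    (hδ : ∀ ζ : ℂ, ‖ζ‖ = 1 → angle (φ ζ) ζ ≤ δ) {w : ℂ} (hw : ‖w‖ < 1) (h0 : avgMap φ w = 0) :
    π * ‖w‖ ≤ 2 * δ := by
  have hδ0 : 0 ≤ δ := (angle_nonneg _ _).trans (hδ 1 norm_one)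
  rcases le_or_gt π δ with hδπ | hδπ
  · nlinarith [norm_nonneg w, Real.pi_pos]
  set r := ‖w‖
  set e := exp (w.arg * I)
  have he : ‖e⁻¹‖ = 1 := by rw [norm_inv, norm_exp_ofReal_mul_I, inv_one]
  set u : ℝ → ℂ := fun x => e⁻¹ * φ (exp (x * I))
  have hu1 : ∀ x, ‖u x‖ = 1 := fun x => by
    rw [norm_mul, he, hmaps _ (norm_exp_ofReal_mul_I x), one_mul]
  have hu : Continuous u :=
    continuous_const.mul (hcont.comp_continuous (by fun_prop) norm_exp_ofReal_mul_I)
  have hint : ∫ x in 0..2 * π, mobH (-r) (u x) = 0 := by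
    simp only [avgMap, mul_comm I, sub_div_one_sub_conj_mul_eq w, integral_const_mul,
      smul_eq_zero, mul_eq_zero, exp_ne_zero, false_or] at h0
    exact h0.resolve_left (by positivity)
  have hzero : ∫ x in 0..2 * π, blaschkeRe r (u x).re = 0 := by
    have hcomp := continuous_mobH_comp (t := -r) (by rwa [abs_neg, abs_norm]) hu hu1
    rw [integral_congr fun x _ => (re_mobH_neg r (hu1 x)).symm]
    change ∫ x in 0..2 * π, reCLM (mobH (-r) (u x)) = 0
    rw [reCLM.intervalIntegral_comp_comm (hcomp.intervalIntegrable _ _), hint, map_zero]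
  have hle : ∀ x : ℝ, blaschkeRe r (u x).re ≤
      blaschkeRe r (Real.cos (max 0 (Real.arccos (Real.cos (x - w.arg)) - δ))) := fun x => by
    have hv : e⁻¹ * exp (x * I) = exp ((x - w.arg : ℝ) * I) := by
      rw [← exp_neg, ← exp_add]; push_cast; ring_nf
    have hangle : angle (u x) (exp ((x - w.arg : ℝ) * I)) ≤ δ := by
      rw [← hv, angle_mul_left (inv_ne_zero (exp_ne_zero _))]
      exact hδ _ (norm_exp_ofReal_mul_I x)
    have hre := re_le_cos_max_arccos_re_sub (hu1 x) (norm_exp_ofReal_mul_I _) hangle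
    rw [exp_ofReal_mul_I_re] at hre
    exact monotoneOn_blaschkeRe (norm_nonneg w) hw (hu1 x ▸ re_le_norm (u x))
      (Real.cos_le_one _) hre
  have hmono := integral_mono_on (μ := MeasureTheory.volume) (f := fun x => blaschkeRe r (u x).re)
    (g := fun x => blaschkeRe r (Real.cos (max 0 (Real.arccos (Real.cos (x - w.arg)) - δ))))
    Real.two_pi_pos.le
    ((((continuousOn_blaschkeRe (norm_nonneg w) hw).comp_continuous (continuous_re.comp hu))
      fun x => hu1 x ▸ re_le_norm (u x)).intervalIntegrable _ _)
    ((((continuous_blaschkeRe_cos (norm_nonneg w) hw).comp (by fun_prop))).intervalIntegrable _ _)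
    fun x _ => hle x
  linarith [integral_blaschkeRe_cos_max_arccos_le (norm_nonneg w) hw hδ0 hδπ.le w.arg]

theorem stmt_14_general (s : ℝ) (hs : -1 < s) (hs1 : s < 1) (ε₀ : ℝ)
    (ψ : ℂ → ℂ)
    (hcont : ContinuousOn ψ {z : ℂ | ‖z‖ = 1})
    (hmaps : ∀ ζ : ℂ, ‖ζ‖ = 1 → ‖ψ ζ‖ = 1)
    (hclose : ∀ ζ : ℂ, ‖ζ‖ = 1 → ‖ψ ζ - mobH s ζ‖ ≤ ε₀) :
    (∀ ζ : ℂ, ‖ζ‖ = 1 →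
      dS1 (mobH (-s) (ψ ζ)) ζ ≤ Real.pi * ((1 + |s|) / (1 - |s|)) * ε₀ / 2) ∧
    (∀ w : ℂ, ‖w‖ < 1 → avgMap (fun ζ => mobH (-s) (ψ ζ)) w = 0 →
      ‖w‖ ≤ Real.pi * ((1 + |s|) / (1 - |s|)) * ε₀) := by
  have hs' : |s| < 1 := abs_lt.2 ⟨hs, hs1⟩
  have hs'' : |-s| < 1 := by rwa [abs_neg]
  set L := (1 + |s|) / (1 - |s|)
  have hL : 0 ≤ L := div_nonneg (by positivity) (sub_pos.mpr hs').le
  have hφ : ∀ ζ : ℂ, ‖ζ‖ = 1 → ‖mobH (-s) (ψ ζ)‖ = 1 := fun ζ hζ => norm_mobH hs'' (hmaps ζ hζ)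
  have hchord : ∀ ζ : ℂ, ‖ζ‖ = 1 → ‖mobH (-s) (ψ ζ) - ζ‖ ≤ L * ε₀ := fun ζ hζ => by
    calc ‖mobH (-s) (ψ ζ) - ζ‖
        = ‖mobH (-s) (ψ ζ) - mobH (-s) (mobH s ζ)‖ := by
          rw [mobH_neg_mobH hs' (one_add_mul_ne_zero hs' hζ.le)]
      _ ≤ L * ‖ψ ζ - mobH s ζ‖ := by
          simpa only [abs_neg] using
            norm_mobH_sub_mobH_le hs'' (hmaps ζ hζ).le (norm_mobH hs' hζ).le
      _ ≤ L * ε₀ := by gcongr; exact hclose ζ hζ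
  have hangle : ∀ ζ : ℂ, ‖ζ‖ = 1 → angle (mobH (-s) (ψ ζ)) ζ ≤ π / 2 * (L * ε₀) :=
    fun ζ hζ => (angle_le_mul_norm_sub (hφ ζ hζ) hζ).trans (by gcongr; exact hchord ζ hζ)
  refine ⟨fun ζ hζ => (dS1_le_angle (hφ ζ hζ) hζ).trans ((hangle ζ hζ).trans_eq (by ring)),
    fun w hw h0 => ?_⟩
  have hφcont : ContinuousOn (fun ζ => mobH (-s) (ψ ζ)) {z : ℂ | ‖z‖ = 1} :=
    (differentiableOn_mobH hs'').continuousOn.comp hcont fun ζ hζ => by simp [hmaps ζ hζ]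
  have hw' : ‖w‖ ≤ L * ε₀ := by
    have := pi_mul_norm_le_of_avgMap_eq_zero hφcont hφ hangle hw h0
    nlinarith [Real.pi_pos]
  nlinarith [Real.pi_gt_three, norm_nonneg w]

/-- Let `s ∈ (−1,1)`, `L = (1 + |s|)/(1 − |s|)`, `ε₀ > 0`, and let
`ψ : S¹ → S¹` be continuous with `|ψ(ζ) − h_s(ζ)| ≤ ε₀` on `S¹`.  Then
`d_{S¹}(h_s⁻¹(ψ(ζ)), ζ) ≤ π·L·ε₀/2` for all `ζ ∈ S¹`, and every barycenter
`w ∈ 𝔻` of `h_s⁻¹ ∘ ψ` satisfies `|w| ≤ π·L·ε₀`. -/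
theorem stmt_14 (s : ℝ) (hs : -1 < s) (hs1 : s < 1) (ε₀ : ℝ) (hε₀ : 0 < ε₀)
    (ψ : ℂ → ℂ)
    (hcont : ContinuousOn ψ {z : ℂ | ‖z‖ = 1})
    (hmaps : ∀ ζ : ℂ, ‖ζ‖ = 1 → ‖ψ ζ‖ = 1)
    (hclose : ∀ ζ : ℂ, ‖ζ‖ = 1 → ‖ψ ζ - mobH s ζ‖ ≤ ε₀) :
    (∀ ζ : ℂ, ‖ζ‖ = 1 →
      dS1 (mobH (-s) (ψ ζ)) ζ ≤ Real.pi * ((1 + |s|) / (1 - |s|)) * ε₀ / 2) ∧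
    (∀ w : ℂ, ‖w‖ < 1 → avgMap (fun ζ => mobH (-s) (ψ ζ)) w = 0 →
      ‖w‖ ≤ Real.pi * ((1 + |s|) / (1 - |s|)) * ε₀) :=
  stmt_14_general s hs hs1 ε₀ ψ hcont hmaps hclose
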